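/- arXiv:2412.10212 — 4 statements merged into one kernel-verified Lean document; each statement's English description precedes it below -/
import Mathlib

section
/- Every ideal of the ring R is principal, i.e., R is a principal ideal ring. -/
/- The ring R = Z4 + ωZ4 with ω² = ω, realized as Z4[ω]/(ω² − ω). -/
noncomputable section

open Polynomial

abbrev Z4 := ZMod 4

abbrev R := AdjoinRoot (X ^ 2 - X : Z4[X])

def ω : R := AdjoinRoot.root (X ^ 2 - X : Z4[X])

def ι : Z4 →+* R := algebraMap Z4 R

/-- ZMod n is a principal ideal ring, being a surjective image of ℤ. -/
lemma zmod_pir (n : ℕ) : IsPrincipalIdealRing (ZMod n) :=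
  IsPrincipalIdealRing.of_surjective (Int.castRingHom (ZMod n)) ZMod.intCast_surjective

/-- A product of two principal ideal rings is a principal ideal ring. -/
lemma prod_pir (A B : Type*) [CommRing A] [CommRing B]
    [IsPrincipalIdealRing A] [IsPrincipalIdealRing B] :
    IsPrincipalIdealRing (A × B) := by
  constructor
  intro K
  obtain ⟨a, ha⟩ := (IsPrincipalIdealRing.principal (Ideal.map (RingHom.fst A B) K)).principal
  obtain ⟨b, hb⟩ := (IsPrincipalIdealRing.principal (Ideal.map (RingHom.snd A B) K)).principal
  refine ⟨(a, b), ?_⟩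
  rw [Ideal.ideal_prod_eq K, ha, hb]
  ext ⟨x, y⟩
  simp only [Ideal.mem_prod, Ideal.mem_span_singleton, Ideal.submodule_span_eq]
  constructor
  · rintro ⟨hx, hy⟩
    exact prod_dvd_iff.mpr ⟨hx, hy⟩
  · intro h
    exact prod_dvd_iff.mp h

lemma omega_sq : ω ^ 2 = ω := by
  have h := AdjoinRoot.eval₂_root (X ^ 2 - X : Z4[X])
  rw [eval₂_sub, eval₂_pow, eval₂_X, sub_eq_zero] at h
  exact h

/-- The ring hom (a,b) ↦ aω + b(1-ω). -/
def φ : Z4 × Z4 →ₐ[Z4] R where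
  toFun p := ι p.1 * ω + ι p.2 * (1 - ω)
  map_one' := by
    show ι 1 * ω + ι 1 * (1 - ω) = 1
    rw [map_one]; ring
  map_mul' p q := by
    show ι (p.1 * q.1) * ω + ι (p.2 * q.2) * (1 - ω) =
      (ι p.1 * ω + ι p.2 * (1 - ω)) * (ι q.1 * ω + ι q.2 * (1 - ω))
    rw [map_mul, map_mul]
    linear_combination -(ι p.1 - ι p.2) * (ι q.1 - ι q.2) * omega_sq
  map_zero' := by
    show ι 0 * ω + ι 0 * (1 - ω) = 0
    rw [map_zero]; ring
  map_add' p q := by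
    show ι (p.1 + q.1) * ω + ι (p.2 + q.2) * (1 - ω) =
      (ι p.1 * ω + ι p.2 * (1 - ω)) + (ι q.1 * ω + ι q.2 * (1 - ω))
    rw [map_add, map_add]; ring
  commutes' a := by
    show ι a * ω + ι a * (1 - ω) = ι a
    ring

lemma φ_surjective : Function.Surjective φ := by
  rw [← AlgHom.range_eq_top]
  rw [eq_top_iff, ← AdjoinRoot.adjoinRoot_eq_top (f := (X ^ 2 - X : Z4[X])),
    Algebra.adjoin_le_iff, Set.singleton_subset_iff]
  refine ⟨(1, 0), ?_⟩
  show ι 1 * ω + ι 0 * (1 - ω) = ω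
  rw [map_one, map_zero]; ring

/-- Every ideal of the ring R is principal,
i.e., R is a principal ideal ring. -/
theorem stmt1 : IsPrincipalIdealRing R := by
  have : IsPrincipalIdealRing (ZMod 4) := zmod_pir 4
  have : IsPrincipalIdealRing (Z4 × Z4) := prod_pir Z4 Z4
  exact IsPrincipalIdealRing.of_surjective φ.toRingHom φ_surjective

end
end

section
/- An ideal I of R is maximal if and only if I = ⟨1 + ω⟩ or I = ⟨2 + ω⟩; in particular, R is semi-local with exactly two maximal ideals. -/
/- The ring R = Z4 + ωZ4 with ω² = ω, realized as Z4[ω]/(ω² − ω). -/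
noncomputable section

open Polynomial

lemma f_monic : (X ^ 2 - X : Z4[X]).Monic :=
  Polynomial.monic_X_pow_sub (by simpa using Polynomial.degree_X_le.trans_lt (by norm_num))

lemma hω2 : (ω : R) ^ 2 = ω := by
  have h : (AdjoinRoot.mk (X^2 - X : Z4[X])) (X^2 - X) = 0 := AdjoinRoot.mk_self
  rw [map_sub] at h
  simpa [ω, sub_eq_zero] using h

lemma h4R : (4 : R) = 0 := by
  have h1 : (4 : R) = ι (4 : Z4) := (map_ofNat ι 4).symm
  have h2 : (4 : Z4) = 0 := by decide
  rw [h1, h2, map_zero]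

instance : Fact (1 < 4) := ⟨by norm_num⟩

lemma rep (x : R) : ∃ a b : Z4, x = ι a + ι b * ω := by
  induction x using AdjoinRoot.induction_on with
  | ih p =>
    refine ⟨(p %ₘ (X^2 - X)).coeff 0, (p %ₘ (X^2 - X)).coeff 1, ?_⟩
    have hdeg : (p %ₘ (X^2 - X)).degree ≤ 1 := by
      have := Polynomial.degree_modByMonic_lt p f_monic
      have h2 : (X^2 - X : Z4[X]).degree = 2 := by compute_degree!
      rw [h2] at this
      exact Order.le_of_lt_succ (by exact_mod_cast this)
    have hq := Polynomial.eq_X_add_C_of_degree_le_one hdeg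
    have hmk : AdjoinRoot.mk (X^2 - X : Z4[X]) p = AdjoinRoot.mk _ (p %ₘ (X^2 - X)) := by
      conv_lhs => rw [← Polynomial.modByMonic_add_div p (X^2 - X : Z4[X])]
      simp [map_add, map_mul, AdjoinRoot.mk_self]
    rw [hmk]
    conv_lhs => rw [hq]
    simp [ι, ω, AdjoinRoot.algebraMap_eq, map_add, map_mul, AdjoinRoot.mk_C, AdjoinRoot.mk_X]
    ring

def ρ : Z4 →+* ZMod 2 := ZMod.castHom (show (2:ℕ) ∣ 4 by norm_num) (ZMod 2)

def φ1 : R →+* ZMod 2 := AdjoinRoot.lift ρ 1 (by simp)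
def φ2 : R →+* ZMod 2 := AdjoinRoot.lift ρ 0 (by simp)

lemma φ1_ω : φ1 ω = 1 := AdjoinRoot.lift_root _
lemma φ2_ω : φ2 ω = 0 := AdjoinRoot.lift_root _
lemma φ1_ι (a : Z4) : φ1 (ι a) = ρ a := by
  simp [φ1, ι, AdjoinRoot.algebraMap_eq, AdjoinRoot.lift_of]
lemma φ2_ι (a : Z4) : φ2 (ι a) = ρ a := by
  simp [φ2, ι, AdjoinRoot.algebraMap_eq, AdjoinRoot.lift_of]

lemma ι_two : ι (2 : Z4) = (2 : R) := by simp [ι, map_ofNat]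

lemma φ1_surj : Function.Surjective φ1 := fun y => by
  fin_cases y
  · exact ⟨0, map_zero _⟩
  · exact ⟨1, map_one _⟩

lemma φ2_surj : Function.Surjective φ2 := fun y => by
  fin_cases y
  · exact ⟨0, map_zero _⟩
  · exact ⟨1, map_one _⟩

lemma even_of_cast_zero (u : Z4) (h : ρ u = 0) : ∃ c : Z4, u = 2 * c := by
  revert h; revert u; decide

lemma one_sub_ω_mem : (1 : R) - ω ∈ Ideal.span {(1 + ω : R)} := by
  have h : (1:R) - ω = (1 + ω) * (1 - ω) := by linear_combination hω2
  rw [h]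
  exact Ideal.mul_mem_right _ _ (Ideal.subset_span rfl)

lemma two_mem1 : (2 : R) ∈ Ideal.span {(1 + ω : R)} := by
  have h := Ideal.add_mem _ (Ideal.subset_span rfl : (1+ω:R) ∈ Ideal.span {(1 + ω : R)}) one_sub_ω_mem
  have e : (1+ω:R) + (1 - ω) = 2 := by ring
  rwa [e] at h

lemma ω_mem2 : (ω : R) ∈ Ideal.span {(2 + ω : R)} := by
  have h := Ideal.mul_mem_right (ω * 3) _ (Ideal.subset_span rfl : (2+ω:R) ∈ Ideal.span {(2 + ω : R)})
  have e : (2+ω:R) * (ω * 3) = ω := by linear_combination 3 * hω2 + 2 * ω * h4R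
  rwa [e] at h

lemma two_mem2 : (2 : R) ∈ Ideal.span {(2 + ω : R)} := by
  have h := Ideal.sub_mem _ (Ideal.subset_span rfl : (2+ω:R) ∈ Ideal.span {(2 + ω : R)}) ω_mem2
  have e : (2+ω:R) - ω = 2 := by ring
  rwa [e] at h

lemma hspan1 : Ideal.span {(1 + ω : R)} = RingHom.ker φ1 := by
  apply le_antisymm
  · rw [Ideal.span_le, Set.singleton_subset_iff]
    show φ1 (1 + ω) = 0
    rw [map_add, map_one, φ1_ω]; decide
  · intro x hx
    obtain ⟨a, b, rfl⟩ := rep x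
    rw [RingHom.mem_ker, map_add, map_mul, φ1_ι, φ1_ι, φ1_ω, mul_one, ← map_add] at hx
    obtain ⟨c, hc⟩ := even_of_cast_zero _ hx
    have hx2 : ι a + ι b * ω = ι c * 2 - ι b * (1 - ω) := by
      have h := congrArg ι hc
      rw [map_add, map_mul, ι_two] at h
      linear_combination h
    rw [hx2]
    exact Ideal.sub_mem _ (Ideal.mul_mem_left _ _ two_mem1)
      (Ideal.mul_mem_left _ _ one_sub_ω_mem)

lemma hspan2 : Ideal.span {(2 + ω : R)} = RingHom.ker φ2 := by
  apply le_antisymm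
  · rw [Ideal.span_le, Set.singleton_subset_iff]
    show φ2 (2 + ω) = 0
    rw [← ι_two, map_add, φ2_ι, φ2_ω]; decide
  · intro x hx
    obtain ⟨a, b, rfl⟩ := rep x
    rw [RingHom.mem_ker, map_add, map_mul, φ2_ι, φ2_ι, φ2_ω, mul_zero, add_zero] at hx
    obtain ⟨c, hc⟩ := even_of_cast_zero _ hx
    have hx2 : ι a + ι b * ω = ι c * 2 + ι b * ω := by
      have h := congrArg ι hc
      rw [map_mul, ι_two] at h
      linear_combination h
    rw [hx2]
    exact Ideal.add_mem _ (Ideal.mul_mem_left _ _ two_mem2)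
      (Ideal.mul_mem_left _ _ ω_mem2)

lemma max1 : (Ideal.span {(1 + ω : R)}).IsMaximal := by
  rw [hspan1]
  exact RingHom.ker_isMaximal_of_surjective φ1 φ1_surj

lemma max2 : (Ideal.span {(2 + ω : R)}).IsMaximal := by
  rw [hspan2]
  exact RingHom.ker_isMaximal_of_surjective φ2 φ2_surj

/-- An ideal I of R is maximal iff I = ⟨1 + ω⟩ or I = ⟨2 + ω⟩;
in particular R has exactly two maximal ideals (the two ideals are distinct). -/
theorem stmt3 :
    (∀ I : Ideal R, I.IsMaximal ↔
      I = Ideal.span {(1 + ω : R)} ∨ I = Ideal.span {(2 + ω : R)}) ∧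
    Ideal.span {(1 + ω : R)} ≠ Ideal.span {(2 + ω : R)} := by
  constructor
  · intro I
    constructor
    · intro hI
      have hprime : I.IsPrime := hI.isPrime
      have h2I : (2:R) ∈ I := by
        have hm : (2:R) * 2 ∈ I := by
          have e : (2:R)*2 = 4 := by norm_num
          rw [e, h4R]; exact I.zero_mem
        rcases hprime.mem_or_mem hm with h|h <;> exact h
      have hωI : ω * (1 - ω) ∈ I := by
        have e : (ω:R) * (1-ω) = -(ω^2 - ω) := by ring
        rw [e, hω2]; simp
      rcases hprime.mem_or_mem hωI with h|h
      · right
        exact (max2.eq_of_le hI.ne_top (by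
          rw [Ideal.span_le, Set.singleton_subset_iff]
          exact I.add_mem h2I h)).symm
      · left
        have hmem : (1:R)+ω ∈ I := by
          have e : (1:R)+ω = 2 - (1-ω) := by ring
          rw [e]; exact I.sub_mem h2I h
        exact (max1.eq_of_le hI.ne_top (by
          rw [Ideal.span_le, Set.singleton_subset_iff]; exact hmem)).symm
    · rintro (rfl|rfl)
      · exact max1
      · exact max2
  · intro h
    have h1 : (1:R)+ω ∈ Ideal.span {(2+ω:R)} := h ▸ Ideal.subset_span rfl
    rw [hspan2, RingHom.mem_ker, map_add, map_one, φ2_ω] at h1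
    exact absurd h1 (by decide)

end
end

section
/- Let S be a (not necessarily commutative) ring, f: R → S a ring homomorphism, and x ∈ S an element satisfying the skew commutation rule x·f(r) = f(θ(r))·x + f(d(r)) for all r ∈ R. Then for every r ∈ R and every natural number n: if n is even, xⁿ·f(r) = f(r)·xⁿ, and if n is odd, xⁿ·f(r) = f(θ(r))·xⁿ + f(d(r))·x^{n−1}. In particular, x²·f(r) = f(r)·x² for all r ∈ R. -/
/- The ring R = Z4 + ωZ4 with ω² = ω, realized as Z4[ω]/(ω² − ω). -/
noncomputable section

open Polynomial

/-- Let S be a (not necessarily commutative) ring, f : R → S a ring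
homomorphism, and x ∈ S satisfying x·f(r) = f(θ(r))·x + f(d(r)) for all r ∈ R.
Then for every r ∈ R and n : ℕ: if n is even, xⁿ·f(r) = f(r)·xⁿ, and if n is odd,
xⁿ·f(r) = f(θ(r))·xⁿ + f(d(r))·x^(n−1). In particular x²·f(r) = f(r)·x². -/
theorem stmt10 (θ : R →+* R)
    (hθ : ∀ a b : Z4, θ (ι a + ω * ι b) = ι a + (1 + 3 * ω) * ι b)
    (α : R) (hα : θ α + α = 0)
    (d : R → R) (hd : ∀ r : R, d r = α * (θ r - r))
    {S : Type*} [Ring S] (f : R →+* S) (x : S)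
    (hx : ∀ r : R, x * f r = f (θ r) * x + f (d r)) :
    (∀ (r : R) (n : ℕ),
      (Even n → x ^ n * f r = f r * x ^ n) ∧
      (Odd n → x ^ n * f r = f (θ r) * x ^ n + f (d r) * x ^ (n - 1))) ∧
    (∀ r : R, x ^ 2 * f r = f r * x ^ 2) := by
  have h4 : (4 : R) = 0 := by
    rw [show (4:R) = ((4:ℕ):R) from by norm_num, ← map_natCast ι 4,
      show ((4:ℕ):Z4) = 0 from by decide, map_zero]
  have hι : ∀ a : Z4, θ (ι a) = ι a := by
    intro a
    have := hθ a 0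
    simpa using this
  have hω : θ ω = 1 + 3 * ω := by
    have := hθ 0 1
    simpa using this
  have hωω : θ (θ ω) = ω := by
    rw [hω, map_add, map_mul, map_one, hω, show θ (3:R) = 3 by
      rw [show (3:R) = ((3:ℕ):R) by norm_num, map_natCast]]
    have : (1 : R) + 3 * (1 + 3 * ω) = 4 + (4 + 4) * ω + ω := by ring
    rw [this, h4]
    ring
  have hθθ : ∀ r : R, θ (θ r) = r := by
    intro r
    induction r using AdjoinRoot.induction_on with
    | ih p =>
      induction p using Polynomial.induction_on with
      | C a => rw [AdjoinRoot.mk_C, show (AdjoinRoot.of _ a) = ι a from rfl, hι, hι]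
      | add p q hp hq => rw [map_add, map_add, map_add, hp, hq]
      | monomial n a hn =>
        rw [show C a * X ^ (n+1) = C a * X ^ n * X by ring, map_mul,
          AdjoinRoot.mk_X, show AdjoinRoot.root _ = ω from rfl,
          map_mul, map_mul, hn, hωω]
  -- derivation facts
  have hθα : θ α = -α := by linear_combination hα
  have hθd : ∀ r : R, θ (d r) = d r := by
    intro r
    rw [hd, map_mul, map_sub, hθθ, hθα]
    ring
  have hdθ : ∀ r : R, d (θ r) = - d r := by
    intro r
    rw [hd, hθθ, hd]
    ring
  have hdd : ∀ r : R, d (d r) = 0 := by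
    intro r
    rw [hd (d r), hθd]
    ring
  have hx2 : ∀ r : R, x ^ 2 * f r = f r * x ^ 2 := by
    intro r
    rw [sq, mul_assoc, hx r, mul_add, ← mul_assoc, hx (θ r), hx (d r), hθθ, hdθ, hθd, hdd,
      map_neg, map_zero]
    noncomm_ring
  refine ⟨?_, hx2⟩
  have heven : ∀ (m : ℕ) (r : R), x ^ (2 * m) * f r = f r * x ^ (2 * m) := by
    intro m
    induction m with
    | zero => intro r; simp
    | succ k ih =>
      intro r
      rw [show 2 * (k + 1) = 2 * k + 2 from by ring, pow_add, mul_assoc, hx2, ← mul_assoc, ih, mul_assoc]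
  intro r n
  constructor
  · rintro ⟨m, hm⟩
    have : n = 2 * m := by omega
    subst this
    exact heven m r
  · rintro ⟨m, hm⟩
    subst hm
    have h1 : x ^ (2 * m + 1) * f r = x ^ (2 * m) * (x * f r) := by
      rw [pow_succ, mul_assoc]
    rw [h1, hx r, mul_add, ← mul_assoc, heven m (θ r), heven m (d r)]
    simp [pow_succ, mul_assoc]


end
end

section
/- Let n ≥ 1, let γ be a unit of R, let α ∈ R satisfy θ(α) + α = 0, and let C₁ be a (θ, d, γ)-constacyclic code of length n over R such that its Gray image Φ(C₁) ⊆ Z4^{2n} is reversal-closed. Let C₂ be the R-submodule of Rⁿ generated by the all-ones vector (1, 1, …, 1). Then D = Φ(C₁) + Φ(C₂) is a DNA code of length 2n over Z4: D is reversal-closed and D is an RC-code, i.e., for every (x₀, …, x_{2n−1}) ∈ D both (x_{2n−1}, …, x₀) and (1 − x_{2n−1}, …, 1 − x₀) belong to D. -/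
/- The ring R = Z4 + ωZ4 with ω² = ω, realized as Z4[ω]/(ω² − ω). -/
noncomputable section

open Polynomial

/-- The (θ, d, γ)-constacyclic shift τ on Rⁿ:
τ(c₀, …, c_{n−1}) = (γθ(c_{n−1}) + d(c₀), θ(c₀) + d(c₁), …, θ(c_{n−2}) + d(c_{n−1})).
(In `Fin n`, `i - 1` for `i = 0` is `n - 1`.) -/
def constaShift {n : ℕ} [NeZero n] (θ : R →+* R) (d : R → R) (γ : R)
    (c : Fin n → R) : Fin n → R :=
  fun i => (if i = 0 then γ * θ (c (i - 1)) else θ (c (i - 1))) + d (c i)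

/-- A set of words over R is an R-code (reverse-closed, with the reverse
taken via θ componentwise): c ∈ C implies c^R = (θ(c_{n−1}), …, θ(c₀)) ∈ C. -/
def isRcode {n : ℕ} (θ : R →+* R) (C : Set (Fin n → R)) : Prop :=
  ∀ c ∈ C, (fun i => θ (c i.rev)) ∈ C

/-- A set of words over R is an RC-code:
c ∈ C implies c^{RC} = (1 − θ(c_{n−1}), …, 1 − θ(c₀)) ∈ C. -/
def isRCcode {n : ℕ} (θ : R →+* R) (C : Set (Fin n → R)) : Prop :=
  ∀ c ∈ C, (fun i => 1 - θ (c i.rev)) ∈ C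

/-- The componentwise Gray map Φ : Rⁿ → Z4^{2n}, flattening each pair φ(cᵢ)
into two consecutive coordinates. -/
def Phi {n : ℕ} (φ : R → Z4 × Z4) (c : Fin n → R) : Fin (2 * n) → Z4 :=
  fun j =>
    if j.val % 2 = 0 then (φ (c ⟨j.val / 2, by have := j.isLt; omega⟩)).1
    else (φ (c ⟨j.val / 2, by have := j.isLt; omega⟩)).2

/-- A set D ⊆ Z4^m is reversal-closed if (x₀, …, x_{m−1}) ∈ D implies
(x_{m−1}, …, x₀) ∈ D. -/
def ReversalClosed {m : ℕ} (D : Set (Fin m → Z4)) : Prop :=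
  ∀ x ∈ D, (fun i => x i.rev) ∈ D

open scoped Pointwise

/- ---------- auxiliary lemmas ---------- -/

instance : Nontrivial Z4 := ⟨0, 1, by decide⟩

lemma R_rep (r : R) : ∃ a b : Z4, r = ι a + ω * ι b := by
  obtain ⟨p, rfl⟩ := AdjoinRoot.mk_surjective r
  have hdX : (X : Z4[X]).degree < 2 := by
    rw [Polynomial.degree_X]; norm_num
  have hf : (X ^ 2 - X : Z4[X]).Monic := Polynomial.monic_X_pow_sub hdX
  refine ⟨(p %ₘ (X ^ 2 - X)).coeff 0, (p %ₘ (X ^ 2 - X)).coeff 1, ?_⟩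
  have h1 : AdjoinRoot.mk (X ^ 2 - X : Z4[X]) p
      = AdjoinRoot.mk (X ^ 2 - X : Z4[X]) (p %ₘ (X ^ 2 - X)) := by
    conv_lhs => rw [← Polynomial.modByMonic_add_div p (X ^ 2 - X)]
    simp [map_add, map_mul]
  have hdeg : (p %ₘ (X ^ 2 - X)).degree ≤ 1 := by
    have h2 : (X ^ 2 - X : Z4[X]).degree = 2 := by compute_degree!
    have := Polynomial.degree_modByMonic_lt p hf
    rw [h2] at this
    exact Order.le_of_lt_succ (by exact_mod_cast this)
  rw [h1]
  conv_lhs => rw [Polynomial.eq_X_add_C_of_degree_le_one hdeg]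
  simp only [map_add, map_mul, AdjoinRoot.mk_C, AdjoinRoot.mk_X, ← AdjoinRoot.algebraMap_eq]
  show _ = algebraMap Z4 R _ + AdjoinRoot.root _ * algebraMap Z4 R _
  ring

section phi
variable (φ : R → Z4 × Z4) (hφ : ∀ a b : Z4, φ (ι a + ω * ι b) = (a, a + b))

include hφ

lemma phi_add (r s : R) : φ (r + s) = φ r + φ s := by
  obtain ⟨a, b, rfl⟩ := R_rep r
  obtain ⟨c, e, rfl⟩ := R_rep s
  have h : (ι a + ω * ι b) + (ι c + ω * ι e) = ι (a + c) + ω * ι (b + e) := by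
    rw [map_add, map_add]; ring
  rw [h, hφ, hφ, hφ]
  simp [Prod.ext_iff]; ring

lemma phi_neg (r : R) : φ (-r) = - φ r := by
  obtain ⟨a, b, rfl⟩ := R_rep r
  have h : -(ι a + ω * ι b) = ι (-a) + ω * ι (-b) := by
    rw [map_neg, map_neg]; ring
  rw [h, hφ, hφ]
  simp [Prod.ext_iff]; ring

lemma Phi_add {n : ℕ} (c c' : Fin n → R) :
    Phi φ (c + c') = Phi φ c + Phi φ c' := by
  funext j
  simp [Phi, phi_add φ hφ]
  split <;> rfl

lemma Phi_neg {n : ℕ} (c : Fin n → R) :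
    Phi φ (-c) = - Phi φ c := by
  funext j
  simp [Phi, phi_neg φ hφ]
  split <;> rfl

lemma Phi_const {n : ℕ} (a b : Z4) (j : Fin (2 * n)) :
    Phi φ (fun _ : Fin n => ι a + ω * ι b) j = if j.val % 2 = 0 then a else a + b := by
  simp [Phi, hφ]

lemma Phi_const_rev {n : ℕ} (a b : Z4) (j : Fin (2 * n)) :
    Phi φ (fun _ : Fin n => ι a + ω * ι b) j.rev
      = Phi φ (fun _ : Fin n => ι (a + b) + ω * ι (-b)) j := by
  rw [Phi_const φ hφ, Phi_const φ hφ]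
  have hr : (j.rev : ℕ) = 2 * n - (j + 1) := Fin.val_rev j
  have hj := j.isLt
  by_cases h : (j : ℕ) % 2 = 0
  · rw [if_neg (by omega : ¬ ((j.rev : ℕ) % 2 = 0)), if_pos h]
  · rw [if_pos (by omega : (j.rev : ℕ) % 2 = 0), if_neg h]
    ring

end phi

theorem stmt15 {n : ℕ} [NeZero n] (θ : R →+* R)
    (hθ : ∀ a b : Z4, θ (ι a + ω * ι b) = ι a + (1 + 3 * ω) * ι b)
    (φ : R → Z4 × Z4)
    (hφ : ∀ a b : Z4, φ (ι a + ω * ι b) = (a, a + b))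
    (γ : R) (hγ : IsUnit γ)
    (α : R) (hα : θ α + α = 0)
    (d : R → R) (hd : ∀ r : R, d r = α * (θ r - r))
    (C₁ : Submodule R (Fin n → R))
    (hC₁ : constaShift θ d γ '' (C₁ : Set (Fin n → R)) = (C₁ : Set (Fin n → R)))
    (h₁ : ReversalClosed (Phi φ '' (C₁ : Set (Fin n → R))))
    (C₂ : Submodule R (Fin n → R))
    (hC₂ : C₂ = Submodule.span R {fun _ : Fin n => (1 : R)})
    (D : Set (Fin (2 * n) → Z4))
    (hD : D = Phi φ '' (C₁ : Set (Fin n → R)) + Phi φ '' (C₂ : Set (Fin n → R))) :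
    ReversalClosed D ∧ ∀ x ∈ D, (fun i : Fin (2 * n) => 1 - x i.rev) ∈ D := by
  have hmemC₂ : ∀ r : R, (fun _ : Fin n => r) ∈ C₂ := by
    intro r
    rw [hC₂]
    refine Submodule.mem_span_singleton.mpr ⟨r, ?_⟩
    funext i; simp
  constructor
  · -- reversal-closed
    intro x hx
    rw [hD] at hx ⊢
    obtain ⟨u, hu, v, hv, rfl⟩ := Set.mem_add.mp hx
    obtain ⟨c₂, hc₂, rfl⟩ := hv
    rw [hC₂] at hc₂
    obtain ⟨r, rfl⟩ := Submodule.mem_span_singleton.mp hc₂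
    have hconst : (r • fun _ : Fin n => (1 : R)) = fun _ : Fin n => r := by
      funext i; simp
    obtain ⟨a, b, hab⟩ := R_rep r
    refine Set.mem_add.mpr ⟨_, h₁ u hu,
      Phi φ (fun _ : Fin n => ι (a + b) + ω * ι (-b)),
      ⟨_, hmemC₂ _, rfl⟩, ?_⟩
    funext j
    have := Phi_const_rev φ hφ (n := n) a b j
    simp only [Pi.add_apply]
    rw [hconst, hab, this]
  · -- RC-code
    intro x hx
    rw [hD] at hx ⊢
    obtain ⟨u, hu, v, hv, rfl⟩ := Set.mem_add.mp hx
    obtain ⟨c₂, hc₂, rfl⟩ := hv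
    rw [hC₂] at hc₂
    obtain ⟨r, rfl⟩ := Submodule.mem_span_singleton.mp hc₂
    have hconst : (r • fun _ : Fin n => (1 : R)) = fun _ : Fin n => r := by
      funext i; simp
    obtain ⟨a, b, hab⟩ := R_rep r
    -- the C₁ part: minus the reversal of u
    obtain ⟨w, hw, hwe⟩ := h₁ u hu
    refine Set.mem_add.mpr ⟨Phi φ (-w), ⟨-w, neg_mem hw, rfl⟩,
      Phi φ (fun _ : Fin n => ι (1 - a - b) + ω * ι b),
      ⟨_, hmemC₂ _, rfl⟩, ?_⟩
    funext j
    have h1 : Phi φ (-w) j = - Phi φ w j := by rw [Phi_neg φ hφ]; rfl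
    have h2 : Phi φ w j = u j.rev := by rw [hwe]
    have h3 := Phi_const_rev φ hφ (n := n) a b j
    have h4 := Phi_const φ hφ (n := n) (a + b) (-b) j
    have h5 := Phi_const φ hφ (n := n) (1 - a - b) b j
    simp only [Pi.add_apply]
    rw [h1, h2, h5, hconst, hab, h3, h4]
    split <;> ring
end
end
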